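/- Fisher information is monotone under convolution: for any two probability densities p and q on ℝ, I(p * q) ≤ min(I(p), I(q)); equivalently, for independent random variables X and Y, I(X+Y) ≤ min(I(X), I(Y)). -/

import Mathlib

/-!
Writing `p * q = ∫ p (· - y) q y dy` as a mixture of translates of `p`, the weighted
Cauchy–Schwarz inequality gives pointwise `(p * q)' ^ 2 / (p * q) ≤ ∫ (p' ^ 2 / p) (· - y) q y dy`,
and integrating in `x` (Tonelli) yields `I(p * q) ≤ I(p)`.

For `I(p * q) ≤ I(q)` the same argument needs `(p * q)' = p * q'`. We may assume `I(q) < ∞`;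
then Cauchy–Schwarz makes `q'` integrable, so `q` is bounded and, by Fubini, `p * q` is an
indefinite integral of `p * q'`. The Lebesgue differentiation theorem then identifies `(p * q)'`
with `p * q'` almost everywhere, which is all the integrated bound uses.
-/

open MeasureTheory Filter
open scoped ENNReal Interval

theorem lintegral_mul_sq_le {α : Type*} [MeasurableSpace α] {μ : Measure α} {f g : α → ℝ≥0∞}
    (hf : AEMeasurable f μ) (hg : AEMeasurable g μ) :
    (∫⁻ x, f x * g x ∂μ) ^ 2 ≤ (∫⁻ x, f x ^ 2 ∂μ) * ∫⁻ x, g x ^ 2 ∂μ := by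
  have holder := ENNReal.lintegral_mul_le_Lp_mul_Lq μ Real.HolderConjugate.two_two hf hg
  calc (∫⁻ x, f x * g x ∂μ) ^ 2
      ≤ ((∫⁻ x, f x ^ (2 : ℝ) ∂μ) ^ (1 / 2 : ℝ) * (∫⁻ x, g x ^ (2 : ℝ) ∂μ) ^ (1 / 2 : ℝ)) ^ 2 :=
        pow_le_pow_left' holder 2
    _ = (∫⁻ x, f x ^ 2 ∂μ) * ∫⁻ x, g x ^ 2 ∂μ := by
        simp only [ENNReal.rpow_two, mul_pow, ← ENNReal.rpow_natCast, ← ENNReal.rpow_mul]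
        norm_num

theorem lintegral_lintegral_mul_sub {G : Type*} [MeasurableSpace G] [AddGroup G]
    [MeasurableAdd₂ G] [MeasurableNeg G] {μ : Measure G} [SFinite μ] [μ.IsAddRightInvariant]
    {F H : G → ℝ≥0∞} (hF : Measurable F) (hH : AEMeasurable H μ) :
    ∫⁻ x, ∫⁻ y, F (x - y) * H y ∂μ ∂μ = (∫⁻ x, F x ∂μ) * ∫⁻ y, H y ∂μ := by
  rw [lintegral_lintegral_swap ((hF.comp measurable_sub).aemeasurable.mul hH.comp_snd)]
  calc ∫⁻ y, ∫⁻ x, F (x - y) * H y ∂μ ∂μ = ∫⁻ y, (∫⁻ x, F x ∂μ) * H y ∂μ := by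
        refine lintegral_congr fun y => ?_
        rw [lintegral_mul_const (f := fun x => F (x - y)) (H y) (hF.comp (measurable_sub_const y)),
          lintegral_sub_right_eq_self F y]
    _ = (∫⁻ x, F x ∂μ) * ∫⁻ y, H y ∂μ := lintegral_const_mul'' _ hH

theorem mul_sq_div_mul_eq (a b w : ℝ) : (a * w) ^ 2 / (b * w) = a ^ 2 / b * w := by
  rcases eq_or_ne w 0 with rfl | hw
  · simp
  rcases eq_or_ne b 0 with rfl | hb
  · simp
  field_simp

section Mixture

variable {α : Type*} [MeasurableSpace α] {μ : Measure α} {f f' w : α → ℝ}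

theorem sq_lintegral_enorm_le_lintegral_sq_div_mul (hf : ∀ x, 0 ≤ f x)
    (hf' : ∀ x, f x = 0 → f' x = 0) (hfm : AEMeasurable f μ) (hf'm : AEMeasurable f' μ) :
    (∫⁻ x, ‖f' x‖ₑ ∂μ) ^ 2
      ≤ (∫⁻ x, ENNReal.ofReal (f' x ^ 2 / f x) ∂μ) * ∫⁻ x, ENNReal.ofReal (f x) ∂μ := by
  have hsplit : ∀ x, ‖f' x‖ₑ = ENNReal.ofReal (|f' x| / √(f x)) * ENNReal.ofReal √(f x) := by
    intro x
    rw [← ENNReal.ofReal_mul (by positivity), Real.enorm_eq_ofReal_abs]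
    rcases (hf x).eq_or_lt with h0 | hpos
    · simp [hf' x h0.symm]
    · rw [div_mul_cancel₀ _ (Real.sqrt_pos.mpr hpos).ne']
  have hsq : ∀ x, ENNReal.ofReal (|f' x| / √(f x)) ^ 2 = ENNReal.ofReal (f' x ^ 2 / f x) := by
    intro x
    rw [← ENNReal.ofReal_pow (by positivity), div_pow, sq_abs, Real.sq_sqrt (hf x)]
  have hsq' : ∀ x, ENNReal.ofReal √(f x) ^ 2 = ENNReal.ofReal (f x) := by
    intro x
    rw [← ENNReal.ofReal_pow (Real.sqrt_nonneg _), Real.sq_sqrt (hf x)]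
  simp_rw [hsplit, ← hsq, ← hsq']
  exact lintegral_mul_sq_le (hf'm.abs.div hfm.sqrt).ennreal_ofReal hfm.sqrt.ennreal_ofReal

/-- Convexity of Fisher information under mixing. -/
theorem ofReal_sq_integral_div_integral_le (hf : ∀ x, 0 ≤ f x)
    (hf' : ∀ x, f x = 0 → f' x = 0) (hw : ∀ x, 0 ≤ w x) (hfm : AEMeasurable f μ)
    (hf'm : AEMeasurable f' μ) (hwm : AEMeasurable w μ) :
    ENNReal.ofReal ((∫ x, f' x * w x ∂μ) ^ 2 / ∫ x, f x * w x ∂μ)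
      ≤ ∫⁻ x, ENNReal.ofReal (f' x ^ 2 / f x) * ENNReal.ofReal (w x) ∂μ := by
  rcases le_or_gt (∫ x, f x * w x ∂μ) 0 with hle | hpos
  · rw [ENNReal.ofReal_of_nonpos (div_nonpos_of_nonneg_of_nonpos (sq_nonneg _) hle)]
    exact zero_le
  -- a nonintegrable mixture would have integral `0`
  have hint : Integrable (fun x => f x * w x) μ := by
    by_contra h
    rw [integral_undef h] at hpos
    exact hpos.false
  have hCS := sq_lintegral_enorm_le_lintegral_sq_div_mul (μ := μ) (f := fun x => f x * w x)
    (f' := fun x => f' x * w x) (fun x => mul_nonneg (hf x) (hw x))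
    (fun x hx => by rcases mul_eq_zero.mp hx with h | h <;> simp [h, hf' x]) (hfm.mul hwm)
    (hf'm.mul hwm)
  simp only [mul_sq_div_mul_eq] at hCS
  rw [← ofReal_integral_eq_lintegral_ofReal hint (ae_of_all _ fun x => mul_nonneg (hf x) (hw x))]
    at hCS
  rw [ENNReal.ofReal_div_of_pos hpos]
  refine ENNReal.div_le_of_le_mul ?_
  calc ENNReal.ofReal ((∫ x, f' x * w x ∂μ) ^ 2) = ‖∫ x, f' x * w x ∂μ‖ₑ ^ 2 := by
        rw [Real.enorm_eq_ofReal_abs, ← ENNReal.ofReal_pow (abs_nonneg _), sq_abs]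
    _ ≤ (∫⁻ x, ‖f' x * w x‖ₑ ∂μ) ^ 2 := pow_le_pow_left' (enorm_integral_le_lintegral_enorm _) 2
    _ ≤ _ := by simpa only [ENNReal.ofReal_mul (div_nonneg (sq_nonneg _) (hf _))] using hCS

end Mixture

theorem HasDerivAt.eq_zero_of_nonneg_of_eq_zero {f : ℝ → ℝ} {f' x : ℝ} (hf : HasDerivAt f f' x)
    (hnonneg : ∀ y, 0 ≤ f y) (hx : f x = 0) : f' = 0 :=
  IsLocalMin.hasDerivAt_eq_zero (Eventually.of_forall fun y => hx ▸ hnonneg y) hf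

theorem measurable_of_forall_hasDerivAt {f f' : ℝ → ℝ} (hf : ∀ x, HasDerivAt f (f' x) x) :
    Measurable f' :=
  funext (fun x => (hf x).deriv) ▸ measurable_deriv f

noncomputable def fisherInfo (f f' : ℝ → ℝ) : ℝ≥0∞ :=
  ∫⁻ x in {x | 0 < f x}, ENNReal.ofReal (f' x ^ 2 / f x)

-- For `f ≥ 0` the restriction to `{0 < f}` is automatic, since `f' x ^ 2 / 0 = 0` in Lean.
theorem fisherInfo_eq_lintegral {f f' : ℝ → ℝ} (hf : ∀ x, 0 ≤ f x) :
    fisherInfo f f' = ∫⁻ x, ENNReal.ofReal (f' x ^ 2 / f x) := by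
  refine setLIntegral_eq_of_support_subset fun x hx => (hf x).lt_of_ne' fun h0 => hx ?_
  simp [h0]

theorem fisherInfo_conv_le_left {p p' q c c' : ℝ → ℝ} (hp : ∀ x, 0 ≤ p x)
    (hpderiv : ∀ x, HasDerivAt p (p' x) x) (hq : ∀ x, 0 ≤ q x) (hqint : Integrable q)
    (hqmass : ∫ x, q x = 1) (hc : ∀ x, c x = ∫ y, p (x - y) * q y)
    (hc' : ∀ᵐ x, c' x = ∫ y, p' (x - y) * q y) :
    fisherInfo c c' ≤ fisherInfo p p' := by
  have hpm : Measurable p :=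
    (Differentiable.continuous fun x => (hpderiv x).differentiableAt).measurable
  have hp'm : Measurable p' := measurable_of_forall_hasDerivAt hpderiv
  have hc_nonneg : ∀ x, 0 ≤ c x := fun x =>
    hc x ▸ integral_nonneg fun y => mul_nonneg (hp _) (hq y)
  rw [fisherInfo_eq_lintegral hc_nonneg, fisherInfo_eq_lintegral hp]
  calc ∫⁻ x, ENNReal.ofReal (c' x ^ 2 / c x)
      ≤ ∫⁻ x, ∫⁻ y, ENNReal.ofReal (p' (x - y) ^ 2 / p (x - y)) * ENNReal.ofReal (q y) := by
        refine lintegral_mono_ae ?_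
        filter_upwards [hc'] with x hx
        rw [hx, hc x]
        exact ofReal_sq_integral_div_integral_le (fun y => hp _)
          (fun y => (hpderiv _).eq_zero_of_nonneg_of_eq_zero hp) hq
          (hpm.comp (measurable_const_sub x)).aemeasurable
          (hp'm.comp (measurable_const_sub x)).aemeasurable hqint.aemeasurable
    _ = (∫⁻ x, ENNReal.ofReal (p' x ^ 2 / p x)) * ∫⁻ y, ENNReal.ofReal (q y) :=
        lintegral_lintegral_mul_sub ((hp'm.pow_const 2).div hpm).ennreal_ofReal
          hqint.aemeasurable.ennreal_ofReal
    _ = ∫⁻ x, ENNReal.ofReal (p' x ^ 2 / p x) := by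
        rw [← ofReal_integral_eq_lintegral_ofReal hqint (ae_of_all _ hq), hqmass,
          ENNReal.ofReal_one, mul_one]

theorem integrable_deriv_of_fisherInfo_ne_top {f f' : ℝ → ℝ} (hf : ∀ x, 0 ≤ f x)
    (hfderiv : ∀ x, HasDerivAt f (f' x) x) (hfint : Integrable f) (hI : fisherInfo f f' ≠ ⊤) :
    Integrable f' := by
  have hf'm : Measurable f' := measurable_of_forall_hasDerivAt hfderiv
  have hCS := sq_lintegral_enorm_le_lintegral_sq_div_mul hf
    (fun x => (hfderiv x).eq_zero_of_nonneg_of_eq_zero hf) hfint.aemeasurable hf'm.aemeasurable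
  rw [← fisherInfo_eq_lintegral hf] at hCS
  have hsq : (∫⁻ x, ‖f' x‖ₑ) ^ 2 < ⊤ :=
    hCS.trans_lt (ENNReal.mul_lt_top hI.lt_top hfint.lintegral_lt_top)
  exact ⟨hf'm.aestronglyMeasurable, (ENNReal.pow_lt_top_iff.mp hsq).resolve_right two_ne_zero⟩

theorem norm_le_integral_norm_of_hasDerivAt {E : Type*} [NormedAddCommGroup E] [NormedSpace ℝ E]
    [CompleteSpace E] {f f' : ℝ → E} (hf : ∀ x, HasDerivAt f (f' x) x) (hfint : Integrable f)
    (hf'int : Integrable f') (x : ℝ) : ‖f x‖ ≤ ∫ t, ‖f' t‖ := by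
  have hlim := tendsto_zero_of_hasDerivAt_of_integrableOn_Iic (a := x) (fun t _ => hf t)
    hf'int.integrableOn hfint.integrableOn
  have hftc := integral_Iic_of_hasDerivAt_of_tendsto' (a := x) (fun t _ => hf t)
    hf'int.integrableOn hlim
  rw [sub_zero] at hftc
  rw [← hftc]
  exact (norm_integral_le_integral_norm _).trans
    (setIntegral_le_integral hf'int.norm (ae_of_all _ fun _ => norm_nonneg _))

theorem intervalIntegral_integral_swap {α E : Type*} [MeasurableSpace α] {μ : Measure α}
    [SFinite μ] [NormedAddCommGroup E] [NormedSpace ℝ E] {f : ℝ → α → E} {a b : ℝ}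
    (hf : Integrable (Function.uncurry f) ((volume.restrict (Ι a b)).prod μ)) :
    ∫ y, (∫ t in a..b, f t y) ∂μ = ∫ t in a..b, ∫ y, f t y ∂μ := by
  simp_rw [intervalIntegral.intervalIntegral_eq_integral_uIoc, integral_smul]
  rw [integral_integral_swap hf]

theorem integrable_comp_sub_mul_prod {f g : ℝ → ℝ} (hf : Integrable f) (hg : Integrable g) :
    Integrable (fun z : ℝ × ℝ => g (z.1 - z.2) * f z.2) (volume.prod volume) := by
  simpa [mul_comm] using hf.convolution_integrand (ContinuousLinearMap.mul ℝ ℝ) hg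

theorem integral_comp_sub_mul_sub_integral_eq_intervalIntegral {p q q' : ℝ → ℝ}
    (hpint : Integrable p) (hqderiv : ∀ x, HasDerivAt q (q' x) x) (hqint : Integrable q)
    (hq'int : Integrable q') (a b : ℝ) :
    (∫ y, q (b - y) * p y) - ∫ y, q (a - y) * p y = ∫ t in a..b, ∫ y, q' (t - y) * p y := by
  have hqc : Continuous q := Differentiable.continuous fun x => (hqderiv x).differentiableAt
  have hint : ∀ z, Integrable (fun y => q (z - y) * p y) := fun z =>
    hpint.bdd_mul (hqc.comp (continuous_const.sub continuous_id)).aestronglyMeasurable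
      (ae_of_all _ fun y => norm_le_integral_norm_of_hasDerivAt hqderiv hqint hq'int (z - y))
  have hftc : ∀ y, q (b - y) - q (a - y) = ∫ t in a..b, q' (t - y) := fun y => by
    rw [intervalIntegral.integral_comp_sub_right q' y,
      intervalIntegral.integral_eq_sub_of_hasDerivAt (fun t _ => hqderiv t)
        hq'int.intervalIntegrable]
  rw [← integral_sub (hint b) (hint a)]
  simp_rw [← sub_mul, hftc, ← intervalIntegral.integral_mul_const]
  exact intervalIntegral_integral_swap
    ((integrable_comp_sub_mul_prod hpint hq'int).mono_measure
      (Measure.prod_mono Measure.restrict_le_self le_rfl))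

theorem ae_eq_integral_deriv_comp_sub_mul {p q q' c c' : ℝ → ℝ} (hpint : Integrable p)
    (hqderiv : ∀ x, HasDerivAt q (q' x) x) (hqint : Integrable q) (hq'int : Integrable q')
    (hc : ∀ x, c x = ∫ y, q (x - y) * p y) (hcderiv : ∀ x, HasDerivAt c (c' x) x) :
    ∀ᵐ x, c' x = ∫ y, q' (x - y) * p y := by
  have hg : Integrable fun t => ∫ y, q' (t - y) * p y :=
    (integrable_comp_sub_mul_prod hpint hq'int).integral_prod_left
  have hrep : c = fun x => c 0 + ∫ t in (0 : ℝ)..x, ∫ y, q' (t - y) * p y := funext fun x => by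
    rw [← integral_comp_sub_mul_sub_integral_eq_intervalIntegral hpint hqderiv hqint hq'int, hc, hc,
      add_sub_cancel]
  filter_upwards [LocallyIntegrable.ae_hasDerivAt_integral hg.locallyIntegrable] with x hx
  exact (hcderiv x).unique (hrep ▸ (hx 0).const_add (c 0))

/-- Monotonicity of Fisher information under convolution: if `p` and
`q` are absolutely continuous probability densities and `c = p * q` is their
convolution (with derivative `c' = p' * q = p * q'`), then
`I(p * q) ≤ min (I(p), I(q))`. -/
theorem fisherInformation_conv_le_min
    (p p' q q' c c' : ℝ → ℝ)
    (hpnonneg : ∀ x, 0 ≤ p x) (hpint : Integrable p) (hpmass : ∫ x, p x = 1)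
    (hqnonneg : ∀ x, 0 ≤ q x) (hqint : Integrable q) (hqmass : ∫ x, q x = 1)
    (hpderiv : ∀ x, HasDerivAt p (p' x) x)
    (hqderiv : ∀ x, HasDerivAt q (q' x) x)
    (hc : ∀ x, c x = ∫ y, p (x - y) * q y)
    (hcderiv : ∀ x, HasDerivAt c (c' x) x)
    (hc' : ∀ x, c' x = ∫ y, p' (x - y) * q y) :
    (∫⁻ x in {x | 0 < c x}, ENNReal.ofReal ((c' x) ^ 2 / c x))
      ≤ min (∫⁻ x in {x | 0 < p x}, ENNReal.ofReal ((p' x) ^ 2 / p x))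
          (∫⁻ x in {x | 0 < q x}, ENNReal.ofReal ((q' x) ^ 2 / q x)) := by
  have hc_flip : ∀ x, c x = ∫ y, q (x - y) * p y := fun x => by
    rw [hc x, ← integral_sub_left_eq_self _ volume x]
    simp_rw [sub_sub_cancel, mul_comm]
  refine le_min (fisherInfo_conv_le_left hpnonneg hpderiv hqnonneg hqint hqmass hc
    (ae_of_all _ hc')) ?_
  change fisherInfo c c' ≤ fisherInfo q q'
  rcases eq_or_ne (fisherInfo q q') ⊤ with hIq | hIq
  · exact hIq ▸ le_top
  have hq'int := integrable_deriv_of_fisherInfo_ne_top hqnonneg hqderiv hqint hIq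
  exact fisherInfo_conv_le_left hqnonneg hqderiv hpnonneg hpint hpmass hc_flip
    (ae_eq_integral_deriv_comp_sub_mul hpint hqderiv hqint hq'int hc_flip hcderiv)
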